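/- arXiv:2305.16012 — 4 statements merged into one kernel-verified Lean document; each statement's English description precedes it below -/
import Mathlib

section
/- Let A be an N×N matrix over a commutative ring (or field), bordered to an (N+2)×(N+2) matrix with extra columns (b_i), (c_i), extra rows (d_j), (g_j), and corner entries e, f, h, k. Then the Jacobi determinant identity holds: det[[A,b,c],[d,e,f],[g,h,k]] · det(A) = det[[A,c],[g,k]] · det[[A,b],[d,e]] − det[[A,b],[g,h]] · det[[A,c],[d,f]]. -/
open Matrix Polynomial

section Aux
variable {R S : Type*} [CommRing R] [CommRing S] {N : ℕ}

private def bigM (A : Matrix (Fin N) (Fin N) R) (b c d g : Fin N → R) (e f h k : R) :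
    Matrix (Fin N ⊕ Fin 2) (Fin N ⊕ Fin 2) R :=
  Matrix.fromBlocks A
    (Matrix.of fun i (j : Fin 2) => if j = 0 then b i else c i)
    (Matrix.of fun (i : Fin 2) j => if i = 0 then d j else g j)
    !![e, f; h, k]

private def oneM (A : Matrix (Fin N) (Fin N) R) (b d : Fin N → R) (e : R) :
    Matrix (Fin N ⊕ Fin 1) (Fin N ⊕ Fin 1) R :=
  Matrix.fromBlocks A (Matrix.of fun i (_ : Fin 1) => b i)
    (Matrix.of fun (_ : Fin 1) j => d j) !![e]

private def lhsE (A : Matrix (Fin N) (Fin N) R) (b c d g : Fin N → R) (e f h k : R) : R :=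
  (bigM A b c d g e f h k).det * A.det

private def rhsE (A : Matrix (Fin N) (Fin N) R) (b c d g : Fin N → R) (e f h k : R) : R :=
  (oneM A c g k).det * (oneM A b d e).det - (oneM A b g h).det * (oneM A c d f).det

private lemma entry3 {n m p : Type*} [Fintype n] [Fintype m] [Fintype p]
    (C : Matrix m n R) (M : Matrix n n R) (B : Matrix n p R) (i : m) (j : p) :
    (C * M * B) i j = (C i) ⬝ᵥ M *ᵥ (fun l => B l j) := by
  simp [Matrix.mul_apply, Matrix.mulVec, dotProduct, Finset.mul_sum, Finset.sum_mul]
  rw [Finset.sum_comm]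
  apply Finset.sum_congr rfl; intros; apply Finset.sum_congr rfl; intros; ring

private lemma det_oneM (A : Matrix (Fin N) (Fin N) R) (b d : Fin N → R) (e : R)
    [Invertible A] : (oneM A b d e).det = A.det * (e - d ⬝ᵥ ⅟A *ᵥ b) := by
  rw [oneM, Matrix.det_fromBlocks₁₁, Matrix.det_fin_one]
  congr 1
  simp only [Matrix.sub_apply, entry3]
  rfl

private lemma jacobi_aux (A : Matrix (Fin N) (Fin N) R) (b c d g : Fin N → R)
    (e f h k : R) [Invertible A] :
    lhsE A b c d g e f h k = rhsE A b c d g e f h k := by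
  rw [lhsE, rhsE, bigM, Matrix.det_fromBlocks₁₁, det_oneM, det_oneM, det_oneM, det_oneM,
    Matrix.det_fin_two]
  simp only [Matrix.sub_apply, entry3]
  have h00 : (!![e, f; h, k] : Matrix (Fin 2) (Fin 2) R) 0 0 = e := rfl
  have h01 : (!![e, f; h, k] : Matrix (Fin 2) (Fin 2) R) 0 1 = f := rfl
  have h10 : (!![e, f; h, k] : Matrix (Fin 2) (Fin 2) R) 1 0 = h := rfl
  have h11 : (!![e, f; h, k] : Matrix (Fin 2) (Fin 2) R) 1 1 = k := rfl
  rw [h00, h01, h10, h11]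
  have e0 : (Matrix.of fun (i : Fin 2) j => if i = 0 then d j else g j) (0 : Fin 2) = d := rfl
  have e1 : (Matrix.of fun (i : Fin 2) j => if i = 0 then d j else g j) (1 : Fin 2) = g := by
    funext j; simp [Matrix.of_apply]
  have f0 : (fun l => (Matrix.of fun i (j : Fin 2) => if j = 0 then b i else c i) l (0 : Fin 2)) = b := rfl
  have f1 : (fun l => (Matrix.of fun i (j : Fin 2) => if j = 0 then b i else c i) l (1 : Fin 2)) = c := by
    funext l; simp [Matrix.of_apply]
  rw [e0, e1, f0, f1]
  ring

private lemma map_lhsE (φ : R →+* S) (A : Matrix (Fin N) (Fin N) R) (b c d g : Fin N → R)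
    (e f h k : R) :
    φ (lhsE A b c d g e f h k) =
      lhsE (A.map φ) (φ ∘ b) (φ ∘ c) (φ ∘ d) (φ ∘ g) (φ e) (φ f) (φ h) (φ k) := by
  rw [lhsE, lhsE, _root_.map_mul, RingHom.map_det, RingHom.map_det]
  congr 2
  rw [bigM, bigM, RingHom.mapMatrix_apply, Matrix.fromBlocks_map]
  have hB : (Matrix.of fun i (j : Fin 2) => if j = 0 then b i else c i).map φ =
      Matrix.of fun i (j : Fin 2) => if j = 0 then φ (b i) else φ (c i) := by
    ext i j; simp [Matrix.map_apply, apply_ite φ]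
  have hC : (Matrix.of fun (i : Fin 2) j => if i = 0 then d j else g j).map φ =
      Matrix.of fun (i : Fin 2) j => if i = 0 then φ (d j) else φ (g j) := by
    ext i j; simp [Matrix.map_apply, apply_ite φ]
  have hE : (!![e, f; h, k] : Matrix (Fin 2) (Fin 2) R).map φ = !![φ e, φ f; φ h, φ k] := by
    ext i j; fin_cases i <;> fin_cases j <;> simp [Matrix.map_apply]
  rw [hB, hC, hE]
  rfl

private lemma map_oneM (φ : R →+* S) (A : Matrix (Fin N) (Fin N) R) (b d : Fin N → R) (e : R) :
    (oneM A b d e).map φ = oneM (A.map φ) (φ ∘ b) (φ ∘ d) (φ e) := by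
  rw [oneM, oneM, Matrix.fromBlocks_map]
  have hE : (!![e] : Matrix (Fin 1) (Fin 1) R).map φ = !![φ e] := by
    ext i j; fin_cases i <;> fin_cases j <;> simp [Matrix.map_apply]
  rw [hE]
  rfl

private lemma map_rhsE (φ : R →+* S) (A : Matrix (Fin N) (Fin N) R) (b c d g : Fin N → R)
    (e f h k : R) :
    φ (rhsE A b c d g e f h k) =
      rhsE (A.map φ) (φ ∘ b) (φ ∘ c) (φ ∘ d) (φ ∘ g) (φ e) (φ f) (φ h) (φ k) := by
  rw [rhsE, rhsE, map_sub, _root_.map_mul, _root_.map_mul, RingHom.map_det, RingHom.map_det,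
    RingHom.map_det, RingHom.map_det, RingHom.mapMatrix_apply, RingHom.mapMatrix_apply,
    RingHom.mapMatrix_apply, RingHom.mapMatrix_apply, map_oneM, map_oneM, map_oneM, map_oneM]

end Aux

theorem jacobi_determinant_identity {K : Type*} [Field K] {N : ℕ}
    (A : Matrix (Fin N) (Fin N) K) (b c : Fin N → K) (d g : Fin N → K)
    (e f h k : K) :
    (Matrix.fromBlocks A
        (Matrix.of fun i (j : Fin 2) => if j = 0 then b i else c i)
        (Matrix.of fun (i : Fin 2) j => if i = 0 then d j else g j)
        !![e, f; h, k]).det * A.det =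
      (Matrix.fromBlocks A (Matrix.of fun i (_ : Fin 1) => c i)
          (Matrix.of fun (_ : Fin 1) j => g j) !![k]).det *
        (Matrix.fromBlocks A (Matrix.of fun i (_ : Fin 1) => b i)
          (Matrix.of fun (_ : Fin 1) j => d j) !![e]).det -
      (Matrix.fromBlocks A (Matrix.of fun i (_ : Fin 1) => b i)
          (Matrix.of fun (_ : Fin 1) j => g j) !![h]).det *
        (Matrix.fromBlocks A (Matrix.of fun i (_ : Fin 1) => c i)
          (Matrix.of fun (_ : Fin 1) j => d j) !![f]).det := by
  show lhsE A b c d g e f h k = rhsE A b c d g e f h k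
  -- work over polynomials
  set R := Polynomial K
  let F := FractionRing R
  let φ : R →+* F := algebraMap R F
  let A' : Matrix (Fin N) (Fin N) R := (-A).charmatrix
  have hdet : A'.det ≠ 0 := by
    have : A'.det = (-A).charpoly := rfl
    rw [this]
    exact (Matrix.charpoly_monic (-A)).ne_zero
  have hinj : Function.Injective φ := IsFractionRing.injective R F
  haveI : Invertible (A'.map φ) := by
    apply Matrix.invertibleOfIsUnitDet
    rw [← RingHom.mapMatrix_apply, ← RingHom.map_det]
    exact isUnit_iff_ne_zero.2 fun hz => hdet (hinj (by simpa using hz))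
  have key := jacobi_aux (A'.map φ) (φ ∘ (C ∘ b)) (φ ∘ (C ∘ c)) (φ ∘ (C ∘ d)) (φ ∘ (C ∘ g))
    (φ (C e)) (φ (C f)) (φ (C h)) (φ (C k))
  rw [← map_lhsE, ← map_rhsE] at key
  have keyR := hinj key
  have keyK := congrArg (Polynomial.evalRingHom (0 : K)) keyR
  rw [map_lhsE, map_rhsE] at keyK
  have hA : A'.map (Polynomial.evalRingHom (0 : K)) = A := by
    ext i j
    simp [A', Matrix.charmatrix_apply, Matrix.map_apply, Matrix.diagonal_apply]
    split_ifs <;> simp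
  have hv : ∀ v : Fin N → K, (Polynomial.evalRingHom (0 : K)) ∘ (C ∘ v) = v := by
    intro v; funext i; simp
  rw [hA, hv, hv, hv, hv] at keyK
  simpa using keyK
end

section
/- Let η⁺ = (μ+k)x + (μ+k)²t + φ⁺, η⁻ = −(μ−k)x − (μ−k)²t + φ⁻, and e^{φ₀} = 1/(4k²) with k ≠ 0. Then e⁺ = e^{η⁺}/(1 + e^{η⁺+η⁻+φ₀}) and e⁻ = −e^{η⁻}/(1 + e^{η⁺+η⁻+φ₀}) satisfy the reaction-diffusion system −e⁺_t + e⁺_xx = −2h e⁺, e⁻_t + e⁻_xx = −2h e⁻ with h = −e⁺e⁻. -/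
/-! Writing `w = σ(η⁺ + η⁻ + φ₀)` for the logistic sigmoid, the components satisfy
`e⁺_x = e⁺ (μ + k − 2k w)`, `e⁺_t = e⁺ ((μ + k)² − 4μk w)` and `w_x = 2k w (1 − w)`,
and symmetrically for `e⁻`. Both sides of each equation are then `e^±` times a polynomial in `w`;
they agree because `e⁺ e⁻ e^{φ₀} = −w (1 − w)` and `e^{φ₀} = 1/(4k²)`. -/

/-- Partial derivative in the first (space) variable. -/
noncomputable def pX (f : ℝ → ℝ → ℝ) : ℝ → ℝ → ℝ :=
  fun x t => deriv (fun y => f y t) x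

/-- Partial derivative in the second (time) variable. -/
noncomputable def pT (f : ℝ → ℝ → ℝ) : ℝ → ℝ → ℝ :=
  fun x t => deriv (fun s => f x s) t

/-- Phase `η⁺ = (μ+k)x + (μ+k)²t + φ⁺`. -/
noncomputable def etaP (k mu phip : ℝ) (x t : ℝ) : ℝ :=
  (mu + k) * x + (mu + k) ^ 2 * t + phip

/-- Phase `η⁻ = −(μ−k)x − (μ−k)²t + φ⁻`. -/
noncomputable def etaM (k mu phim : ℝ) (x t : ℝ) : ℝ :=
  -(mu - k) * x - (mu - k) ^ 2 * t + phim

/-- One-soliton `e⁺ = e^{η⁺}/(1 + e^{η⁺+η⁻+φ₀})`. -/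
noncomputable def solEp (k mu phip phim phi0 : ℝ) : ℝ → ℝ → ℝ :=
  fun x t => Real.exp (etaP k mu phip x t) /
    (1 + Real.exp (etaP k mu phip x t + etaM k mu phim x t + phi0))

/-- One-soliton `e⁻ = −e^{η⁻}/(1 + e^{η⁺+η⁻+φ₀})`. -/
noncomputable def solEm (k mu phip phim phi0 : ℝ) : ℝ → ℝ → ℝ :=
  fun x t => -Real.exp (etaM k mu phim x t) /
    (1 + Real.exp (etaP k mu phip x t + etaM k mu phim x t + phi0))

open Real

lemma exp_div_one_add_exp (a b : ℝ) : exp a / (1 + exp b) = exp a * sigmoid (-b) := by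
  rw [sigmoid_def, neg_neg, div_eq_mul_inv]

lemma HasDerivAt.exp_div_one_add_exp {P S : ℝ → ℝ} {P' S' y : ℝ}
    (hP : HasDerivAt P P' y) (hS : HasDerivAt S S' y) :
    HasDerivAt (fun y => Real.exp (P y) / (1 + Real.exp (S y)))
      (Real.exp (P y) / (1 + Real.exp (S y)) * (P' - S' * sigmoid (S y))) y := by
  have hσ : HasDerivAt (fun y => sigmoid (S y)) (sigmoid (S y) * (1 - sigmoid (S y)) * S') y :=
    (hasDerivAt_sigmoid _).comp y hS
  simp only [_root_.exp_div_one_add_exp, sigmoid_neg]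
  exact (hP.exp.fun_mul (hσ.const_sub 1)).congr_deriv (by ring)

section OneSoliton

variable (k mu phip phim phi0 : ℝ)

noncomputable def etaSum (x t : ℝ) : ℝ :=
  etaP k mu phip x t + etaM k mu phim x t + phi0

lemma hasDerivAt_etaP_x (x t : ℝ) : HasDerivAt (fun y => etaP k mu phip y t) (mu + k) x :=
  (((hasDerivAt_id' x).const_mul (mu + k)).add_const _).add_const phip |>.congr_deriv (mul_one _)

lemma hasDerivAt_etaM_x (x t : ℝ) : HasDerivAt (fun y => etaM k mu phim y t) (-(mu - k)) x :=
  (((hasDerivAt_id' x).const_mul (-(mu - k))).sub_const _).add_const phim |>.congr_deriv (mul_one _)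

lemma hasDerivAt_etaP_t (x t : ℝ) : HasDerivAt (fun s => etaP k mu phip x s) ((mu + k) ^ 2) t :=
  (((hasDerivAt_id' t).const_mul ((mu + k) ^ 2)).const_add _).add_const phip
    |>.congr_deriv (mul_one _)

lemma hasDerivAt_etaM_t (x t : ℝ) : HasDerivAt (fun s => etaM k mu phim x s) (-(mu - k) ^ 2) t :=
  (((hasDerivAt_id' t).const_mul ((mu - k) ^ 2)).const_sub _).add_const phim
    |>.congr_deriv (by ring)

lemma hasDerivAt_etaSum_x (x t : ℝ) :
    HasDerivAt (fun y => etaSum k mu phip phim phi0 y t) (2 * k) x :=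
  (((hasDerivAt_etaP_x k mu phip x t).add (hasDerivAt_etaM_x k mu phim x t)).add_const phi0)
    |>.congr_deriv (by ring)

lemma hasDerivAt_etaSum_t (x t : ℝ) :
    HasDerivAt (fun s => etaSum k mu phip phim phi0 x s) (4 * mu * k) t :=
  (((hasDerivAt_etaP_t k mu phip x t).add (hasDerivAt_etaM_t k mu phim x t)).add_const phi0)
    |>.congr_deriv (by ring)

lemma solEp_mul_solEm_mul_exp (x t : ℝ) :
    solEp k mu phip phim phi0 x t * solEm k mu phip phim phi0 x t * exp phi0 =
      -(sigmoid (etaSum k mu phip phim phi0 x t) *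
        (1 - sigmoid (etaSum k mu phip phim phi0 x t))) := by
  simp only [solEp, solEm, etaSum, sigmoid_def, exp_neg, exp_add]
  field_simp
  ring

variable {k mu phip phim phi0 : ℝ} {x t : ℝ}

lemma hasDerivAt_solEp_x :
    HasDerivAt (fun y => solEp k mu phip phim phi0 y t)
      (solEp k mu phip phim phi0 x t * (mu + k - 2 * k * sigmoid (etaSum k mu phip phim phi0 x t)))
      x :=
  (hasDerivAt_etaP_x k mu phip x t).exp_div_one_add_exp
    (hasDerivAt_etaSum_x k mu phip phim phi0 x t)

lemma hasDerivAt_solEm_x :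
    HasDerivAt (fun y => solEm k mu phip phim phi0 y t)
      (solEm k mu phip phim phi0 x t *
        (-(mu - k) - 2 * k * sigmoid (etaSum k mu phip phim phi0 x t))) x := by
  simpa only [solEm, etaSum, neg_div, neg_mul] using
    ((hasDerivAt_etaM_x k mu phim x t).exp_div_one_add_exp
      (hasDerivAt_etaSum_x k mu phip phim phi0 x t)).fun_neg

lemma hasDerivAt_sigmoid_etaSum_x :
    HasDerivAt (fun y => sigmoid (etaSum k mu phip phim phi0 y t))
      (sigmoid (etaSum k mu phip phim phi0 x t) * (1 - sigmoid (etaSum k mu phip phim phi0 x t)) *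
        (2 * k)) x :=
  (hasDerivAt_sigmoid _).comp x (hasDerivAt_etaSum_x k mu phip phim phi0 x t)

lemma pX_solEp :
    pX (solEp k mu phip phim phi0) = fun x t =>
      solEp k mu phip phim phi0 x t * (mu + k - 2 * k * sigmoid (etaSum k mu phip phim phi0 x t)) :=
  funext₂ fun _ _ => hasDerivAt_solEp_x.deriv

lemma pX_solEm :
    pX (solEm k mu phip phim phi0) = fun x t =>
      solEm k mu phip phim phi0 x t *
        (-(mu - k) - 2 * k * sigmoid (etaSum k mu phip phim phi0 x t)) :=
  funext₂ fun _ _ => hasDerivAt_solEm_x.deriv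

lemma pT_solEp :
    pT (solEp k mu phip phim phi0) x t =
      solEp k mu phip phim phi0 x t *
        ((mu + k) ^ 2 - 4 * mu * k * sigmoid (etaSum k mu phip phim phi0 x t)) :=
  ((hasDerivAt_etaP_t k mu phip x t).exp_div_one_add_exp
    (hasDerivAt_etaSum_t k mu phip phim phi0 x t)).deriv

lemma pT_solEm :
    pT (solEm k mu phip phim phi0) x t =
      solEm k mu phip phim phi0 x t *
        (-(mu - k) ^ 2 - 4 * mu * k * sigmoid (etaSum k mu phip phim phi0 x t)) := by
  simpa only [pT, solEm, etaSum, neg_div, neg_mul] using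
    ((hasDerivAt_etaM_t k mu phim x t).exp_div_one_add_exp
      (hasDerivAt_etaSum_t k mu phip phim phi0 x t)).fun_neg.deriv

lemma pX_pX_solEp :
    pX (pX (solEp k mu phip phim phi0)) x t =
      solEp k mu phip phim phi0 x t *
        ((mu + k - 2 * k * sigmoid (etaSum k mu phip phim phi0 x t)) ^ 2 -
          4 * k ^ 2 * sigmoid (etaSum k mu phip phim phi0 x t) *
            (1 - sigmoid (etaSum k mu phip phim phi0 x t))) := by
  rw [pX_solEp]
  exact (hasDerivAt_solEp_x.fun_mul
    ((hasDerivAt_sigmoid_etaSum_x.const_mul (2 * k)).const_sub (mu + k))).deriv.trans (by ring)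

lemma pX_pX_solEm :
    pX (pX (solEm k mu phip phim phi0)) x t =
      solEm k mu phip phim phi0 x t *
        ((-(mu - k) - 2 * k * sigmoid (etaSum k mu phip phim phi0 x t)) ^ 2 -
          4 * k ^ 2 * sigmoid (etaSum k mu phip phim phi0 x t) *
            (1 - sigmoid (etaSum k mu phip phim phi0 x t))) := by
  rw [pX_solEm]
  exact (hasDerivAt_solEm_x.fun_mul
    ((hasDerivAt_sigmoid_etaSum_x.const_mul (2 * k)).const_sub (-(mu - k)))).deriv.trans (by ring)

end OneSoliton

theorem one_soliton_solves_RD (k mu phip phim phi0 : ℝ) (hk : k ≠ 0)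
    (hphi0 : Real.exp phi0 = 1 / (4 * k ^ 2)) :
    ∀ x t : ℝ,
      (-(pT (solEp k mu phip phim phi0) x t) + pX (pX (solEp k mu phip phim phi0)) x t =
          -2 * (-(solEp k mu phip phim phi0 x t * solEm k mu phip phim phi0 x t)) *
            solEp k mu phip phim phi0 x t) ∧
      (pT (solEm k mu phip phim phi0) x t + pX (pX (solEm k mu phip phim phi0)) x t =
          -2 * (-(solEp k mu phip phim phi0 x t * solEm k mu phip phim phi0 x t)) *
            solEm k mu phip phim phi0 x t) := by
  intro x t
  have hE : exp phi0 * (4 * k ^ 2) = 1 := by rw [hphi0]; field_simp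
  have hprod := solEp_mul_solEm_mul_exp k mu phip phim phi0 x t
  set u := solEp k mu phip phim phi0 x t
  set v := solEm k mu phip phim phi0 x t
  rw [pT_solEp, pX_pX_solEp, pT_solEm, pX_pX_solEm]
  exact ⟨by linear_combination (-8 * k ^ 2 * u) * hprod + 2 * u ^ 2 * v * hE,
    by linear_combination (-8 * k ^ 2 * v) * hprod + 2 * u * v ^ 2 * hE⟩
end

section
/- Suppose (F, G⁺, G⁻) solves the bilinear RD system (D_x² − D_t)G⁺·F = 0, (D_x² + D_t)G⁻·F = 0, D_x² F·F = −2G⁺G⁻, with F > 0, G⁺ > 0, G⁻ < 0. Then e⁺ = G⁺/F and e⁻ = G⁻/F satisfy the nonlinear RD system −e⁺_t + e⁺_xx = 2 e⁺e⁻ e⁺, e⁻_t + e⁻_xx = 2 e⁺e⁻ e⁻ (i.e., with h = −e⁺e⁻, −e⁺_t+e⁺_xx = −2he⁺ and e⁻_t+e⁻_xx = −2he⁻). -/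
lemma diffAt_lineX {f : ℝ → ℝ → ℝ} (hf : ContDiff ℝ (⊤ : ℕ∞) (Function.uncurry f)) (x t : ℝ) :
    DifferentiableAt ℝ (fun y => f y t) x :=
  DifferentiableAt.comp (f := fun y : ℝ => (y, t)) x (hf.differentiable (by simp) (x, t))
    (DifferentiableAt.prodMk differentiableAt_id (differentiableAt_const t))

lemma hasDerivAt_pX {f : ℝ → ℝ → ℝ} (hf : ContDiff ℝ (⊤ : ℕ∞) (Function.uncurry f)) (x t : ℝ) :
    HasDerivAt (fun y => f y t) (pX f x t) x :=
  (diffAt_lineX hf x t).hasDerivAt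

lemma hasDerivAt_pT {f : ℝ → ℝ → ℝ} (hf : ContDiff ℝ (⊤ : ℕ∞) (Function.uncurry f)) (x t : ℝ) :
    HasDerivAt (fun s => f x s) (pT f x t) t :=
  (DifferentiableAt.comp t (hf.differentiable (by simp) (x, t))
    (DifferentiableAt.prodMk (differentiableAt_const x) differentiableAt_id)).hasDerivAt

lemma contDiff_pX {f : ℝ → ℝ → ℝ} (hf : ContDiff ℝ (⊤ : ℕ∞) (Function.uncurry f)) :
    ContDiff ℝ (⊤ : ℕ∞) (Function.uncurry (pX f)) := by
  have key : Function.uncurry (pX f) = fun p : ℝ × ℝ =>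
      fderiv ℝ (Function.uncurry f) p ((1 : ℝ), (0 : ℝ)) := by
    funext p
    have h1 : HasFDerivAt (Function.uncurry f) (fderiv ℝ (Function.uncurry f) p) p :=
      (hf.differentiable (by simp) p).hasFDerivAt
    have h2 : HasDerivAt (fun y : ℝ => (y, p.2)) ((1 : ℝ), (0 : ℝ)) p.1 :=
      HasDerivAt.prodMk (hasDerivAt_id p.1) (hasDerivAt_const p.1 p.2)
    have h3 : HasDerivAt (fun y : ℝ => f y p.2)
        (fderiv ℝ (Function.uncurry f) p ((1 : ℝ), (0 : ℝ))) p.1 := by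
      exact h1.comp_hasDerivAt p.1 h2
    exact h3.deriv
  rw [key]
  exact (ContinuousLinearMap.apply ℝ ℝ ((1 : ℝ), (0 : ℝ))).contDiff.comp
    (hf.fderiv_right (by simp))

lemma alg1 (a b u At Ut Ax Ux Axx Uxx : ℝ) (hu : u ≠ 0)
    (h1 : Axx * u - 2 * Ax * Ux + a * Uxx - (At * u - a * Ut) = 0)
    (h3 : 2 * (Uxx * u - Ux ^ 2) = -2 * (a * b)) :
    -((At * u - a * Ut) / u ^ 2)
      + ((Axx * u + Ax * Ux - (Ax * Ux + a * Uxx)) * (u ^ 2)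
          - (Ax * u - a * Ux) * (2 * u ^ 1 * Ux)) / (u ^ 2) ^ 2 =
      2 * (a / u * (b / u)) * (a / u) := by
  field_simp
  linear_combination u * h1 - a * h3

lemma alg2 (a b u Bt Ut Bx Ux Bxx Uxx : ℝ) (hu : u ≠ 0)
    (h2 : Bxx * u - 2 * Bx * Ux + b * Uxx + (Bt * u - b * Ut) = 0)
    (h3 : 2 * (Uxx * u - Ux ^ 2) = -2 * (a * b)) :
    (Bt * u - b * Ut) / u ^ 2
      + ((Bxx * u + Bx * Ux - (Bx * Ux + b * Uxx)) * (u ^ 2)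
          - (Bx * u - b * Ux) * (2 * u ^ 1 * Ux)) / (u ^ 2) ^ 2 =
      2 * (a / u * (b / u)) * (b / u) := by
  field_simp
  linear_combination u * h2 - b * h3

theorem bilinear_to_nonlinear_RD (F Gp Gm : ℝ → ℝ → ℝ)
    (hF : ContDiff ℝ (⊤ : ℕ∞) (Function.uncurry F))
    (hGp : ContDiff ℝ (⊤ : ℕ∞) (Function.uncurry Gp))
    (hGm : ContDiff ℝ (⊤ : ℕ∞) (Function.uncurry Gm))
    (hFpos : ∀ x t, 0 < F x t)
    (hGppos : ∀ x t, 0 < Gp x t)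
    (hGmneg : ∀ x t, Gm x t < 0)
    -- (D_x² − D_t) G⁺·F = 0
    (hbil1 : ∀ x t, pX (pX Gp) x t * F x t - 2 * pX Gp x t * pX F x t
        + Gp x t * pX (pX F) x t
        - (pT Gp x t * F x t - Gp x t * pT F x t) = 0)
    -- (D_x² + D_t) G⁻·F = 0
    (hbil2 : ∀ x t, pX (pX Gm) x t * F x t - 2 * pX Gm x t * pX F x t
        + Gm x t * pX (pX F) x t
        + (pT Gm x t * F x t - Gm x t * pT F x t) = 0)
    -- D_x² F·F = −2 G⁺ G⁻
    (hbil3 : ∀ x t, 2 * (pX (pX F) x t * F x t - (pX F x t) ^ 2) =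
        -2 * (Gp x t * Gm x t)) :
    ∀ x t : ℝ,
      (-(pT (fun x t => Gp x t / F x t) x t)
          + pX (pX (fun x t => Gp x t / F x t)) x t =
        2 * (Gp x t / F x t * (Gm x t / F x t)) * (Gp x t / F x t)) ∧
      (pT (fun x t => Gm x t / F x t) x t
          + pX (pX (fun x t => Gm x t / F x t)) x t =
        2 * (Gp x t / F x t * (Gm x t / F x t)) * (Gm x t / F x t)) := by
  have hFne : ∀ y s, F y s ≠ 0 := fun y s => (hFpos y s).ne'
  intro x t
  constructor
  · -- G⁺ part
    have hpXE : ∀ y s, pX (fun x t => Gp x t / F x t) y s =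
        (pX Gp y s * F y s - Gp y s * pX F y s) / F y s ^ 2 := fun y s =>
      ((hasDerivAt_pX hGp y s).div (hasDerivAt_pX hF y s) (hFne y s)).deriv
    have hpTE : pT (fun x t => Gp x t / F x t) x t =
        (pT Gp x t * F x t - Gp x t * pT F x t) / F x t ^ 2 :=
      ((hasDerivAt_pT hGp x t).div (hasDerivAt_pT hF x t) (hFne x t)).deriv
    have hXX : pX (pX (fun x t => Gp x t / F x t)) x t =
        ((pX (pX Gp) x t * F x t + pX Gp x t * pX F x t
            - (pX Gp x t * pX F x t + Gp x t * pX (pX F) x t)) * (F x t ^ 2)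
          - (pX Gp x t * F x t - Gp x t * pX F x t) * (2 * F x t ^ 1 * pX F x t))
          / (F x t ^ 2) ^ 2 := by
      have hfun : (fun y => pX (fun x t => Gp x t / F x t) y t) =
          fun y => (pX Gp y t * F y t - Gp y t * pX F y t) / F y t ^ 2 :=
        funext fun y => hpXE y t
      show deriv (fun y => pX (fun x t => Gp x t / F x t) y t) x = _
      rw [hfun]
      have hnum : HasDerivAt (fun y => pX Gp y t * F y t - Gp y t * pX F y t)
          (pX (pX Gp) x t * F x t + pX Gp x t * pX F x t
            - (pX Gp x t * pX F x t + Gp x t * pX (pX F) x t)) x :=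
        ((hasDerivAt_pX (contDiff_pX hGp) x t).mul (hasDerivAt_pX hF x t)).sub
          ((hasDerivAt_pX hGp x t).mul (hasDerivAt_pX (contDiff_pX hF) x t))
      have hden : HasDerivAt (fun y => F y t ^ 2)
          ((2 : ℕ) * F x t ^ (2 - 1) * pX F x t) x := (hasDerivAt_pX hF x t).pow 2
      have := (hnum.div hden (pow_ne_zero 2 (hFne x t))).deriv
      simp only [Pi.div_def] at this
      rw [this]
      norm_num
    rw [hpTE, hXX]
    exact alg1 _ _ _ _ _ _ _ _ _ (hFne x t) (hbil1 x t) (hbil3 x t)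
  · -- G⁻ part
    have hpXE : ∀ y s, pX (fun x t => Gm x t / F x t) y s =
        (pX Gm y s * F y s - Gm y s * pX F y s) / F y s ^ 2 := fun y s =>
      ((hasDerivAt_pX hGm y s).div (hasDerivAt_pX hF y s) (hFne y s)).deriv
    have hpTE : pT (fun x t => Gm x t / F x t) x t =
        (pT Gm x t * F x t - Gm x t * pT F x t) / F x t ^ 2 :=
      ((hasDerivAt_pT hGm x t).div (hasDerivAt_pT hF x t) (hFne x t)).deriv
    have hXX : pX (pX (fun x t => Gm x t / F x t)) x t =
        ((pX (pX Gm) x t * F x t + pX Gm x t * pX F x t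
            - (pX Gm x t * pX F x t + Gm x t * pX (pX F) x t)) * (F x t ^ 2)
          - (pX Gm x t * F x t - Gm x t * pX F x t) * (2 * F x t ^ 1 * pX F x t))
          / (F x t ^ 2) ^ 2 := by
      have hfun : (fun y => pX (fun x t => Gm x t / F x t) y t) =
          fun y => (pX Gm y t * F y t - Gm y t * pX F y t) / F y t ^ 2 :=
        funext fun y => hpXE y t
      show deriv (fun y => pX (fun x t => Gm x t / F x t) y t) x = _
      rw [hfun]
      have hnum : HasDerivAt (fun y => pX Gm y t * F y t - Gm y t * pX F y t)
          (pX (pX Gm) x t * F x t + pX Gm x t * pX F x t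
            - (pX Gm x t * pX F x t + Gm x t * pX (pX F) x t)) x :=
        ((hasDerivAt_pX (contDiff_pX hGm) x t).mul (hasDerivAt_pX hF x t)).sub
          ((hasDerivAt_pX hGm x t).mul (hasDerivAt_pX (contDiff_pX hF) x t))
      have hden : HasDerivAt (fun y => F y t ^ 2)
          ((2 : ℕ) * F x t ^ (2 - 1) * pX F x t) x := (hasDerivAt_pX hF x t).pow 2
      have := (hnum.div hden (pow_ne_zero 2 (hFne x t))).deriv
      simp only [Pi.div_def] at this
      rw [this]
      norm_num
    rw [hpTE, hXX]
    exact alg2 _ _ _ _ _ _ _ _ _ (hFne x t) (hbil2 x t) (hbil3 x t)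
end

section
/- Suppose (F, G⁺_k, G⁻_k) satisfies the bilinear system (D_x² − 2r_k D_x − D_t)G⁺_k·F = 0, (D_x² + 2r_k D_x + D_t)G⁻_k·F = 0, K D_x² F·F = 2Σ_{k=1}^L(G⁺_kG⁻_k − F²), with K > 0 and F nowhere zero. Then e⁺_k = (e^{(2L/K)t − r_k x + r_k² t}/√K)·G⁺_k/F and e⁻_k = −(e^{−(2L/K)t + r_k x − r_k² t}/√K)·G⁻_k/F satisfy the discrete nonlocal RD system: −e⁺_{k,t} + e⁺_{k,xx} = −2h e⁺_k, e⁻_{k,t} + e⁻_{k,xx} = −2h e⁻_k, where h = −Σ_{k=1}^L e⁺_k e⁻_k. -/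
/-- `e⁺_k = (e^{(2L/K)t − r_k x + r_k² t}/√K)·G⁺_k/F`. -/
noncomputable def ePk (K : ℝ) (L : ℕ) (rk : ℝ) (G F : ℝ → ℝ → ℝ) : ℝ → ℝ → ℝ :=
  fun x t => Real.exp ((2 * L / K) * t - rk * x + rk ^ 2 * t) / Real.sqrt K *
    (G x t / F x t)

/-- `e⁻_k = −(e^{−(2L/K)t + r_k x − r_k² t}/√K)·G⁻_k/F`. -/
noncomputable def eMk (K : ℝ) (L : ℕ) (rk : ℝ) (G F : ℝ → ℝ → ℝ) : ℝ → ℝ → ℝ :=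
  fun x t => -(Real.exp (-((2 * L / K) * t) + rk * x - rk ^ 2 * t) / Real.sqrt K *
    (G x t / F x t))

/-- Auxiliary: `c·e^{αt+βx}·G/F`. -/
noncomputable def mkE (c α β : ℝ) (G F : ℝ → ℝ → ℝ) : ℝ → ℝ → ℝ :=
  fun x t => c * Real.exp (α * t + β * x) * (G x t / F x t)

section formulas

variable {G F : ℝ → ℝ → ℝ}

lemma pX_mkE (c α β : ℝ) (hG : ContDiff ℝ (⊤ : ℕ∞) (Function.uncurry G))
    (hF : ContDiff ℝ (⊤ : ℕ∞) (Function.uncurry F)) (hF0 : ∀ x t, F x t ≠ 0) (x t : ℝ) :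
    pX (mkE c α β G F) x t = c * Real.exp (α * t + β * x) *
      (β * (G x t / F x t) +
        (pX G x t * F x t - G x t * pX F x t) / (F x t) ^ 2) := by
  have hlin : HasDerivAt (fun y : ℝ => α * t + β * y) β x := by
    simpa using ((hasDerivAt_id x).const_mul β).const_add (α * t)
  have hq := (hasDerivAt_pX hG x t).div (hasDerivAt_pX hF x t) (hF0 x t)
  have hd : pX (mkE c α β G F) x t =
      c * (Real.exp (α * t + β * x) * β) * (G x t / F x t) +
        c * Real.exp (α * t + β * x) *
          ((pX G x t * F x t - G x t * pX F x t) / F x t ^ 2) :=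
    (((hlin.exp).const_mul c).mul hq).deriv
  rw [hd]; ring

lemma pT_mkE (c α β : ℝ) (hG : ContDiff ℝ (⊤ : ℕ∞) (Function.uncurry G))
    (hF : ContDiff ℝ (⊤ : ℕ∞) (Function.uncurry F)) (hF0 : ∀ x t, F x t ≠ 0) (x t : ℝ) :
    pT (mkE c α β G F) x t = c * Real.exp (α * t + β * x) *
      (α * (G x t / F x t) +
        (pT G x t * F x t - G x t * pT F x t) / (F x t) ^ 2) := by
  have hlin : HasDerivAt (fun s : ℝ => α * s + β * x) α t := by
    simpa using ((hasDerivAt_id t).const_mul α).add_const (β * x)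
  have hq := (hasDerivAt_pT hG x t).div (hasDerivAt_pT hF x t) (hF0 x t)
  have hd : pT (mkE c α β G F) x t =
      c * (Real.exp (α * t + β * x) * α) * (G x t / F x t) +
        c * Real.exp (α * t + β * x) *
          ((pT G x t * F x t - G x t * pT F x t) / F x t ^ 2) :=
    (((hlin.exp).const_mul c).mul hq).deriv
  rw [hd]; ring

lemma pXX_mkE (c α β : ℝ) (hG : ContDiff ℝ (⊤ : ℕ∞) (Function.uncurry G))
    (hF : ContDiff ℝ (⊤ : ℕ∞) (Function.uncurry F)) (hF0 : ∀ x t, F x t ≠ 0) (x t : ℝ) :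
    pX (pX (mkE c α β G F)) x t = c * Real.exp (α * t + β * x) *
      (β ^ 2 * (G x t / F x t)
        + 2 * β * ((pX G x t * F x t - G x t * pX F x t) / (F x t) ^ 2)
        + (pX (pX G) x t * F x t - G x t * pX (pX F) x t) / (F x t) ^ 2
        - 2 * (pX G x t * F x t - G x t * pX F x t) * pX F x t / (F x t) ^ 3) := by
  have hfun : pX (mkE c α β G F) = fun x t => c * Real.exp (α * t + β * x) *
      (β * (G x t / F x t) +
        (pX G x t * F x t - G x t * pX F x t) / (F x t) ^ 2) := by
    funext x t; exact pX_mkE c α β hG hF hF0 x t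
  rw [hfun]
  have hlin : HasDerivAt (fun y : ℝ => α * t + β * y) β x := by
    simpa using ((hasDerivAt_id x).const_mul β).const_add (α * t)
  have hGd := hasDerivAt_pX hG x t
  have hFd := hasDerivAt_pX hF x t
  have hGxd := hasDerivAt_pX (contDiff_pX hG) x t
  have hFxd := hasDerivAt_pX (contDiff_pX hF) x t
  have hq := hGd.div hFd (hF0 x t)
  have hN := (hGxd.mul hFd).sub (hGd.mul hFxd)
  have hD := hFd.pow 2
  have hq2 := hN.div hD (pow_ne_zero 2 (hF0 x t))
  have hd : pX (fun x t => c * Real.exp (α * t + β * x) *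
      (β * (G x t / F x t) +
        (pX G x t * F x t - G x t * pX F x t) / (F x t) ^ 2)) x t =
      c * (Real.exp (α * t + β * x) * β) *
          (β * (G x t / F x t) + (pX G x t * F x t - G x t * pX F x t) / F x t ^ 2) +
        c * Real.exp (α * t + β * x) *
          (β * ((pX G x t * F x t - G x t * pX F x t) / F x t ^ 2) +
            ((pX (pX G) x t * F x t + pX G x t * pX F x t -
                (pX G x t * pX F x t + G x t * pX (pX F) x t)) * F x t ^ 2 -
              (pX G x t * F x t - G x t * pX F x t) *
                ((2 : ℕ) * F x t ^ (2 - 1) * pX F x t)) / (F x t ^ 2) ^ 2) :=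
    (((hlin.exp).const_mul c).mul ((hq.const_mul β).add hq2)).deriv
  rw [hd]
  have h0 := hF0 x t
  field_simp
  ring

end formulas

theorem bilinear_to_discrete_nonlocal_RD (L : ℕ) (r : Fin L → ℝ) (K : ℝ)
    (hK : 0 < K) (F : ℝ → ℝ → ℝ) (Gp Gm : Fin L → ℝ → ℝ → ℝ)
    (hF : ContDiff ℝ (⊤ : ℕ∞) (Function.uncurry F))
    (hGp : ∀ k, ContDiff ℝ (⊤ : ℕ∞) (Function.uncurry (Gp k)))
    (hGm : ∀ k, ContDiff ℝ (⊤ : ℕ∞) (Function.uncurry (Gm k)))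
    (hF0 : ∀ x t, F x t ≠ 0)
    -- (D_x² − 2 r_k D_x − D_t) G⁺_k·F = 0
    (hb1 : ∀ k x t, pX (pX (Gp k)) x t * F x t - 2 * pX (Gp k) x t * pX F x t
        + Gp k x t * pX (pX F) x t
        - 2 * r k * (pX (Gp k) x t * F x t - Gp k x t * pX F x t)
        - (pT (Gp k) x t * F x t - Gp k x t * pT F x t) = 0)
    -- (D_x² + 2 r_k D_x + D_t) G⁻_k·F = 0
    (hb2 : ∀ k x t, pX (pX (Gm k)) x t * F x t - 2 * pX (Gm k) x t * pX F x t
        + Gm k x t * pX (pX F) x t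
        + 2 * r k * (pX (Gm k) x t * F x t - Gm k x t * pX F x t)
        + (pT (Gm k) x t * F x t - Gm k x t * pT F x t) = 0)
    -- K D_x² F·F = 2 Σ_k (G⁺_k G⁻_k − F²)
    (hb3 : ∀ x t, K * (2 * (pX (pX F) x t * F x t - (pX F x t) ^ 2)) =
        2 * ∑ k : Fin L, (Gp k x t * Gm k x t - (F x t) ^ 2)) :
    ∀ (k : Fin L) (x t : ℝ),
      (-(pT (ePk K L (r k) (Gp k) F) x t) + pX (pX (ePk K L (r k) (Gp k) F)) x t =
          -2 * (-(∑ j : Fin L, ePk K L (r j) (Gp j) F x t * eMk K L (r j) (Gm j) F x t)) *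
            ePk K L (r k) (Gp k) F x t) ∧
      (pT (eMk K L (r k) (Gm k) F) x t + pX (pX (eMk K L (r k) (Gm k) F)) x t =
          -2 * (-(∑ j : Fin L, ePk K L (r j) (Gp j) F x t * eMk K L (r j) (Gm j) F x t)) *
            eMk K L (r k) (Gm k) F x t) := by
  have hsK : Real.sqrt K ≠ 0 := ne_of_gt (Real.sqrt_pos.mpr hK)
  have hsK2 : Real.sqrt K * Real.sqrt K = K := Real.mul_self_sqrt hK.le
  have hK0 : K ≠ 0 := ne_of_gt hK
  -- rewrite ePk/eMk as mkE
  have hEp : ∀ (rk : ℝ) (G : ℝ → ℝ → ℝ),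
      ePk K L rk G F = mkE (1 / Real.sqrt K) (2 * (L : ℝ) / K + rk ^ 2) (-rk) G F := by
    intro rk G; funext x t
    simp only [ePk, mkE]
    rw [show (2 * (L : ℝ) / K) * t - rk * x + rk ^ 2 * t
        = (2 * (L : ℝ) / K + rk ^ 2) * t + (-rk) * x by ring]
    ring
  have hEm : ∀ (rk : ℝ) (G : ℝ → ℝ → ℝ),
      eMk K L rk G F = mkE (-(1 / Real.sqrt K)) (-(2 * (L : ℝ) / K + rk ^ 2)) rk G F := by
    intro rk G; funext x t
    simp only [eMk, mkE]
    rw [show (-(2 * (L : ℝ) / K + rk ^ 2)) * t + rk * x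
        = -((2 * (L : ℝ) / K) * t) + rk * x - rk ^ 2 * t by ring]
    ring
  intro k x t
  have hterm : ∀ j : Fin L,
      ePk K L (r j) (Gp j) F x t * eMk K L (r j) (Gm j) F x t
        = -(Gp j x t * Gm j x t) / (K * (F x t) ^ 2) := by
    intro j
    have h12 : Real.exp ((2 * (L : ℝ) / K) * t - r j * x + r j ^ 2 * t) *
        Real.exp (-((2 * (L : ℝ) / K) * t) + r j * x - r j ^ 2 * t) = 1 := by
      rw [← Real.exp_add, show ((2 * (L : ℝ) / K) * t - r j * x + r j ^ 2 * t) +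
        (-((2 * (L : ℝ) / K) * t) + r j * x - r j ^ 2 * t) = 0 by ring]
      exact Real.exp_zero
    calc ePk K L (r j) (Gp j) F x t * eMk K L (r j) (Gm j) F x t
        = -((Real.exp ((2 * (L : ℝ) / K) * t - r j * x + r j ^ 2 * t) *
            Real.exp (-((2 * (L : ℝ) / K) * t) + r j * x - r j ^ 2 * t)) *
            (Gp j x t * Gm j x t) / ((Real.sqrt K * Real.sqrt K) * (F x t) ^ 2)) := by
          simp only [ePk, eMk]; ring
      _ = -(Gp j x t * Gm j x t) / (K * (F x t) ^ 2) := by rw [h12, hsK2, one_mul, neg_div]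
  have hsum : (∑ j : Fin L, ePk K L (r j) (Gp j) F x t * eMk K L (r j) (Gm j) F x t)
      = -(∑ j : Fin L, Gp j x t * Gm j x t) / (K * (F x t) ^ 2) := by
    rw [Finset.sum_congr rfl (fun j _ => hterm j)]
    rw [← Finset.sum_neg_distrib, ← Finset.sum_div]
  -- bilinear equations solved
  have hF' := hF0 x t
  have h1 : pT (Gp k) x t = (pX (pX (Gp k)) x t * F x t - 2 * pX (Gp k) x t * pX F x t
      + Gp k x t * pX (pX F) x t
      - 2 * r k * (pX (Gp k) x t * F x t - Gp k x t * pX F x t)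
      + Gp k x t * pT F x t) / F x t := by
    field_simp
    linarith [hb1 k x t]
  have h2 : pT (Gm k) x t = (Gm k x t * pT F x t
      - (pX (pX (Gm k)) x t * F x t - 2 * pX (Gm k) x t * pX F x t
        + Gm k x t * pX (pX F) x t
        + 2 * r k * (pX (Gm k) x t * F x t - Gm k x t * pX F x t))) / F x t := by
    field_simp
    linarith [hb2 k x t]
  have hsplit : (∑ j : Fin L, (Gp j x t * Gm j x t - (F x t) ^ 2))
      = (∑ j : Fin L, Gp j x t * Gm j x t) - (L : ℝ) * (F x t) ^ 2 := by
    rw [Finset.sum_sub_distrib, Finset.sum_const, Finset.card_univ, Fintype.card_fin,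
      nsmul_eq_mul]
  have h3 : pX (pX F) x t = ((pX F x t) ^ 2
      + ((∑ j : Fin L, Gp j x t * Gm j x t) - (L : ℝ) * (F x t) ^ 2) / K) / F x t := by
    have hb := hb3 x t
    rw [hsplit] at hb
    field_simp
    linarith [hb]
  constructor
  · rw [hsum, hEp (r k) (Gp k)]
    rw [pT_mkE _ _ _ (hGp k) hF hF0, pXX_mkE _ _ _ (hGp k) hF hF0]
    rw [h1, h3]
    simp only [mkE]
    have he : Real.exp ((2 * (L : ℝ) / K + r k ^ 2) * t + (-(r k)) * x) ≠ 0 := Real.exp_ne_zero _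
    generalize Real.exp ((2 * (L : ℝ) / K + r k ^ 2) * t + (-(r k)) * x) = E at he ⊢
    generalize (∑ j : Fin L, Gp j x t * Gm j x t) = S
    set_option maxHeartbeats 1000000 in field_simp
    ring
  · rw [hsum, hEm (r k) (Gm k)]
    rw [pT_mkE _ _ _ (hGm k) hF hF0, pXX_mkE _ _ _ (hGm k) hF hF0]
    rw [h2, h3]
    simp only [mkE]
    have he : Real.exp ((-(2 * (L : ℝ) / K + r k ^ 2)) * t + (r k) * x) ≠ 0 := Real.exp_ne_zero _
    generalize Real.exp ((-(2 * (L : ℝ) / K + r k ^ 2)) * t + (r k) * x) = E at he ⊢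
    generalize (∑ j : Fin L, Gp j x t * Gm j x t) = S
    set_option maxHeartbeats 2000000 in field_simp
    set_option maxHeartbeats 2000000 in ring
end
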